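/- Let 𝓕 = {[0), [1)}. For every non-injective monoid endomorphism e of B_ω^𝓕, the image of e is contained in the subsemigroup B_ω^{[0)} = {(i,j,[0)) : i,j ∈ ω}. -/
import Mathlib


/-- `[a) = {x ∈ ω : x ≥ a}`. -/
def seg (a : ℕ) : Set ℕ := {x | a ≤ x}

/-- `n + F` taken within `ω`: `{x ∈ ω : x = n + k for some k ∈ F}`. -/
def shift (n : ℤ) (F : Set ℕ) : Set ℕ := {x | ∃ k ∈ F, (x : ℤ) = n + k}

/-- The carrier `B_ω × 𝒫(ω)`. -/
abbrev BF := ℕ × ℕ × Set ℕ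

/-- The multiplication on `B_ω × 𝒫(ω)`. -/
def bfMul (x y : BF) : BF :=
  if x.2.1 ≤ y.1 then
    (x.1 + (y.1 - x.2.1), y.2.1, shift ((x.2.1 : ℤ) - y.1) x.2.2 ∩ y.2.2)
  else
    (x.1, (x.2.1 - y.1) + y.2.1, x.2.2 ∩ shift ((y.1 : ℤ) - x.2.1) y.2.2)

/-- The family `𝓕 = {[0), [1)}`. -/
def Fam : Set (Set ℕ) := {seg 0, seg 1}

/-- The carrier of the monoid `B_ω^𝓕` for `𝓕 = {[0),[1)}`. -/
def Dom : Set BF := {x | x.2.2 ∈ Fam}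

/-- The map `γ_k`. -/
def gam (k : ℕ) : BF → BF := fun x => (k * x.1, k * x.2.1, seg 0)

open Classical

/-- The map `δ_k`. -/
noncomputable def del (k : ℕ) : BF → BF := fun x =>
  if x.2.2 = seg 1 then (k * (x.1 + 1), k * (x.2.1 + 1), seg 0)
  else (k * x.1, k * x.2.1, seg 0)

/-- `e` is a monoid endomorphism of `B_ω^𝓕` for `𝓕 = {[0),[1)}`. -/
def IsMonEnd (e : BF → BF) : Prop :=
  (∀ x ∈ Dom, e x ∈ Dom) ∧
  e (0, 0, seg 0) = (0, 0, seg 0) ∧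
  ∀ x ∈ Dom, ∀ y ∈ Dom, e (bfMul x y) = bfMul (e x) (e y)

lemma seg_eq_iff {a b : ℕ} : seg a = seg b ↔ a = b := by
  constructor
  · intro h
    have h1 : a ∈ seg b := by rw [← h]; exact le_refl a
    have h2 : b ∈ seg a := by rw [h]; exact le_refl b
    simp only [seg, Set.mem_setOf_eq] at h1 h2
    omega
  · rintro rfl; rfl

lemma shift_seg (m : ℤ) (a : ℕ) : shift m (seg a) = seg (m + a).toNat := by
  ext x
  simp only [shift, seg, Set.mem_setOf_eq]
  constructor
  · rintro ⟨k, hk, hx⟩; omega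
  · intro h; exact ⟨(x - m).toNat, by omega, by omega⟩

lemma seg_inter (a b : ℕ) : seg a ∩ seg b = seg (max a b) := by
  ext x; simp only [seg, Set.mem_inter_iff, Set.mem_setOf_eq]; omega

lemma mulSeg (i j k l e₁ e₂ : ℕ) :
    bfMul (i, j, seg e₁) (k, l, seg e₂) =
      if j ≤ k then (i + (k - j), l, seg (max ((j : ℤ) - k + e₁).toNat e₂))
      else (i, (j - k) + l, seg (max e₁ ((k : ℤ) - j + e₂).toNat)) := by
  unfold bfMul
  split_ifs with h
  · simp [shift_seg, seg_inter]
  · simp [shift_seg, seg_inter]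

lemma triple_eq_iff {i j g i' j' g' : ℕ} :
    ((i, j, seg g) : BF) = (i', j', seg g') ↔ i = i' ∧ j = j' ∧ g = g' := by
  simp [Prod.ext_iff, seg_eq_iff]

lemma mem_Dom_of_le {i j g : ℕ} (hg : g ≤ 1) : ((i, j, seg g) : BF) ∈ Dom := by
  interval_cases g <;> simp [Dom, Fam]

lemma exDom {x : BF} (hx : x ∈ Dom) : ∃ i j g, g ≤ 1 ∧ x = (i, j, seg g) := by
  obtain ⟨i, j, F⟩ := x
  simp only [Dom, Fam, Set.mem_setOf_eq, Set.mem_insert_iff, Set.mem_singleton_iff] at hx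
  rcases hx with h | h
  · exact ⟨i, j, 0, by norm_num, by rw [h]⟩
  · exact ⟨i, j, 1, le_refl 1, by rw [h]⟩

/-- The image of any non-injective monoid endomorphism of `B_ω^𝓕` lies in
`B_ω^{[0)} = {(i,j,[0)) : i,j ∈ ω}`. -/
theorem stmt10 (e : BF → BF) (he : IsMonEnd e) (hni : ¬ Set.InjOn e Dom) :
    ∀ x ∈ Dom, ∃ i j : ℕ, e x = (i, j, seg 0) := by
  obtain ⟨hdom, hone, hmul⟩ := he
  have hd : ∀ i j g : ℕ, g ≤ 1 → ((i, j, seg g) : BF) ∈ Dom :=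
    fun i j g hg => mem_Dom_of_le hg
  obtain ⟨p, q, ga, hga, hea⟩ := exDom (hdom _ (hd 1 0 0 (by norm_num)))
  obtain ⟨r, s, gb, hgb, heb⟩ := exDom (hdom _ (hd 0 1 0 (by norm_num)))
  -- b * a = 1
  have hba : bfMul ((0,1,seg 0) : BF) (1,0,seg 0) = ((0,0,seg 0) : BF) := by
    rw [mulSeg, if_pos (by omega), triple_eq_iff]
    refine ⟨by omega, rfl, by omega⟩
  have key : bfMul (r, s, seg gb) (p, q, seg ga) = ((0,0,seg 0) : BF) := by
    rw [← hea, ← heb, ← hmul _ (hd 0 1 0 (by norm_num)) _ (hd 1 0 0 (by norm_num)),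
      hba, hone]
  rw [mulSeg] at key
  have hr : r = 0 ∧ s = p ∧ q = 0 ∧ ga = 0 ∧ gb = 0 := by
    split_ifs at key with h <;> (rw [triple_eq_iff] at key; omega)
  obtain ⟨h_r, h_s, h_q, h_ga, h_gb⟩ := hr
  subst h_r h_q h_ga h_gb
  rw [h_s] at heb
  -- powers of a
  have hpa : ∀ i : ℕ, e (i, 0, seg 0) = (p * i, 0, seg 0) := by
    intro i
    induction i with
    | zero => simpa using hone
    | succ m ih =>
      have h1 : ((m + 1, 0, seg 0) : BF) = bfMul (1, 0, seg 0) (m, 0, seg 0) := by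
        rw [mulSeg, if_pos (by omega), triple_eq_iff]
        exact ⟨by omega, rfl, by omega⟩
      have hms : p * (m + 1) = p * m + p := by ring
      rw [h1, hmul _ (hd 1 0 0 (by norm_num)) _ (hd m 0 0 (by norm_num)), hea, ih,
        mulSeg, if_pos (by omega), triple_eq_iff, hms]
      exact ⟨by omega, rfl, by omega⟩
  -- powers of b
  have hpb : ∀ j : ℕ, e (0, j, seg 0) = (0, p * j, seg 0) := by
    intro j
    induction j with
    | zero => simpa using hone
    | succ m ih =>
      have h1 : ((0, m + 1, seg 0) : BF) = bfMul (0, m, seg 0) (0, 1, seg 0) := by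
        rw [mulSeg]
        split_ifs with h <;> (rw [triple_eq_iff]; refine ⟨by omega, by omega, by omega⟩)
      have hms : p * (m + 1) = p * m + p := by ring
      rw [h1, hmul _ (hd 0 m 0 (by norm_num)) _ (hd 0 1 0 (by norm_num)), ih, heb,
        mulSeg, hms]
      split_ifs with h <;> (rw [triple_eq_iff]; refine ⟨by omega, by omega, by omega⟩)
  -- e on (i,j,seg 0)
  have hij0 : ∀ i j : ℕ, e (i, j, seg 0) = (p * i, p * j, seg 0) := by
    intro i j
    have h1 : ((i, j, seg 0) : BF) = bfMul (i, 0, seg 0) (0, j, seg 0) := by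
      rw [mulSeg, if_pos le_rfl, triple_eq_iff]
      exact ⟨by omega, rfl, by omega⟩
    rw [h1, hmul _ (hd i 0 0 (by norm_num)) _ (hd 0 j 0 (by norm_num)), hpa, hpb,
      mulSeg, if_pos le_rfl, triple_eq_iff]
    exact ⟨by omega, rfl, by omega⟩
  -- e u is an idempotent (n,n,seg gu)
  obtain ⟨n, m, gu, hgum, heu⟩ := exDom (hdom _ (hd 0 0 1 le_rfl))
  have huu : bfMul ((0,0,seg 1) : BF) (0,0,seg 1) = ((0,0,seg 1) : BF) := by
    rw [mulSeg, if_pos le_rfl, triple_eq_iff]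
    exact ⟨rfl, rfl, by omega⟩
  have keyu : bfMul (n, m, seg gu) (n, m, seg gu) = (n, m, seg gu) := by
    rw [← heu, ← hmul _ (hd 0 0 1 le_rfl) _ (hd 0 0 1 le_rfl), huu]
  have hnm : m = n := by
    rw [mulSeg] at keyu
    split_ifs at keyu with h <;> (rw [triple_eq_iff] at keyu; omega)
  subst hnm
  -- u * a = a gives n + gu ≤ p
  have hua : bfMul ((0,0,seg 1) : BF) (1,0,seg 0) = ((1,0,seg 0) : BF) := by
    rw [mulSeg, if_pos (by omega), triple_eq_iff]
    exact ⟨rfl, rfl, by omega⟩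
  have keyd : bfMul (m, m, seg gu) (p, 0, seg 0) = (p, 0, seg 0) := by
    rw [← heu, ← hea, ← hmul _ (hd 0 0 1 le_rfl) _ (hd 1 0 0 (by norm_num)), hua]
  have hnp : m + gu ≤ p := by
    rw [mulSeg] at keyd
    split_ifs at keyd with h <;> (rw [triple_eq_iff] at keyd; omega)
  -- e on (i,j,seg 1)
  have hij1 : ∀ i j : ℕ, e (i, j, seg 1) = (p * i + m, p * j + m, seg gu) := by
    intro i j
    have h1 : ((i, 0, seg 1) : BF) = bfMul (i, 0, seg 0) (0, 0, seg 1) := by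
      rw [mulSeg, if_pos le_rfl, triple_eq_iff]
      exact ⟨by omega, rfl, by omega⟩
    have e1 : e (i, 0, seg 1) = (p * i + m, m, seg gu) := by
      rw [h1, hmul _ (hd i 0 0 (by norm_num)) _ (hd 0 0 1 le_rfl), hpa, heu,
        mulSeg, if_pos (by omega), triple_eq_iff]
      exact ⟨by omega, rfl, by omega⟩
    have h2 : ((i, j, seg 1) : BF) = bfMul (i, 0, seg 1) (0, j, seg 0) := by
      rw [mulSeg, if_pos le_rfl, triple_eq_iff]
      exact ⟨by omega, rfl, by omega⟩
    rw [h2, hmul _ (hd i 0 1 le_rfl) _ (hd 0 j 0 (by norm_num)), e1, hpb, mulSeg]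
    split_ifs with h <;> (rw [triple_eq_iff]; refine ⟨by omega, by omega, by omega⟩)
  by_cases hgu0 : gu = 0
  · subst hgu0
    intro x hx
    obtain ⟨i, j, g, hg, rfl⟩ := exDom hx
    interval_cases g
    · exact ⟨p * i, p * j, hij0 i j⟩
    · exact ⟨p * i + m, p * j + m, hij1 i j⟩
  · exfalso
    have hgu1 : gu = 1 := by omega
    subst hgu1
    have hp : 0 < p := by omega
    apply hni
    intro x hx y hy hxy
    obtain ⟨i, j, g, hg, rfl⟩ := exDom hx
    obtain ⟨k, l, g', hg', rfl⟩ := exDom hy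
    interval_cases g <;> interval_cases g'
    · rw [hij0, hij0, triple_eq_iff] at hxy
      rw [triple_eq_iff]
      exact ⟨Nat.eq_of_mul_eq_mul_left hp hxy.1, Nat.eq_of_mul_eq_mul_left hp hxy.2.1, rfl⟩
    · rw [hij0, hij1, triple_eq_iff] at hxy
      exact absurd hxy.2.2 (by norm_num)
    · rw [hij1, hij0, triple_eq_iff] at hxy
      exact absurd hxy.2.2 (by norm_num)
    · rw [hij1, hij1, triple_eq_iff] at hxy
      rw [triple_eq_iff]
      have e1 : p * i = p * k := by omega
      have e2 : p * j = p * l := by omega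
      exact ⟨Nat.eq_of_mul_eq_mul_left hp e1, Nat.eq_of_mul_eq_mul_left hp e2, rfl⟩
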